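/- arXiv:1012.3183 — 2 statements merged into one kernel-verified Lean document; each statement's English description precedes it below -/
import Mathlib

section
/- Let α be a Schwartz function on ℝ and let N be a natural number. Then there is a constant C, independent of m ∈ ℝ and r ≥ 0, such that ∫₀^{2π} |α(m − r cos θ)| dθ ≤ C ⟨m⟩^{−N} whenever 0 ≤ r ≤ 1 or |m| ≥ 2r. -/
noncomputable section
open MeasureTheory Real
open scoped ENNReal NNReal

/-- Japanese bracket `⟨m⟩ = (1 + m²)^{1/2}`. -/
def jap (m : ℝ) : ℝ := Real.sqrt (1 + m ^ 2)

lemma jap_sq (m : ℝ) : jap m ^ 2 = 1 + m ^ 2 := by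
  rw [jap, Real.sq_sqrt]; positivity

lemma one_le_jap (m : ℝ) : 1 ≤ jap m := by
  have h : Real.sqrt 1 ≤ Real.sqrt (1 + m ^ 2) :=
    Real.sqrt_le_sqrt (by nlinarith [sq_nonneg m])
  simpa [jap] using h

lemma schwartz_poly_decay (α : SchwartzMap ℝ ℂ) (N : ℕ) :
    ∃ D : ℝ, 0 < D ∧ ∀ x : ℝ, (1 + x ^ 2) ^ N * ‖α x‖ ≤ D := by
  obtain ⟨C0, hC0pos, hC0⟩ := α.decay 0 0
  obtain ⟨C1, hC1pos, hC1⟩ := α.decay (2 * N) 0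
  refine ⟨2 ^ N * (C0 + C1), by positivity, fun x => ?_⟩
  have h0 := hC0 x
  have h1 := hC1 x
  rw [norm_iteratedFDeriv_zero] at h0 h1
  simp only [pow_zero, one_mul] at h0
  have hxeq : ‖x‖ ^ (2 * N) = (x ^ 2) ^ N := by
    rw [Real.norm_eq_abs, pow_mul, sq_abs]
  rw [hxeq] at h1
  have hb : (1 + x ^ 2) ^ N ≤ 2 ^ N * (1 + (x ^ 2) ^ N) := by
    have h1' : (1 + x ^ 2) ^ N ≤ (2 * max 1 (x ^ 2)) ^ N := by
      apply pow_le_pow_left₀ (by positivity)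
      have := le_max_left (1 : ℝ) (x ^ 2)
      have := le_max_right (1 : ℝ) (x ^ 2)
      linarith
    have h2' : (2 * max 1 (x ^ 2)) ^ N = 2 ^ N * (max 1 (x ^ 2)) ^ N := mul_pow _ _ _
    have h3' : (max 1 (x ^ 2)) ^ N ≤ 1 + (x ^ 2) ^ N := by
      rcases le_total (1 : ℝ) (x ^ 2) with h | h
      · rw [max_eq_right h]
        nlinarith [pow_nonneg (sq_nonneg x) N]
      · rw [max_eq_left h]
        simp only [one_pow]
        nlinarith [pow_nonneg (sq_nonneg x) N]
    calc (1 + x ^ 2) ^ N ≤ 2 ^ N * (max 1 (x ^ 2)) ^ N := by rw [← h2']; exact h1'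
      _ ≤ 2 ^ N * (1 + (x ^ 2) ^ N) := by
          apply mul_le_mul_of_nonneg_left h3' (by positivity)
  have h2 : (0 : ℝ) < 2 ^ N := by positivity
  have hmul := mul_le_mul_of_nonneg_right hb (norm_nonneg (α x))
  nlinarith [mul_le_mul_of_nonneg_left h0 h2.le, mul_le_mul_of_nonneg_left h1 h2.le]

lemma key_ineq (m r c : ℝ) (hr : 0 ≤ r) (hc : |c| ≤ 1)
    (hcase : r ≤ 1 ∨ 2 * r ≤ |m|) :
    1 + m ^ 2 ≤ 5 * (1 + (m - r * c) ^ 2) := by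
  have hcsq : c ^ 2 ≤ 1 := by nlinarith [sq_abs c, abs_nonneg c]
  have hc2 : (r * c) ^ 2 ≤ r ^ 2 := by
    rw [mul_pow]
    nlinarith [mul_le_mul_of_nonneg_left hcsq (sq_nonneg r)]
  rcases hcase with h1 | h2
  · have hr2 : r ^ 2 ≤ 1 := by nlinarith
    nlinarith [sq_nonneg (2 * m - 5 / 2 * (r * c))]
  · have habs : |r * c| ≤ r := by
      rw [abs_mul, abs_of_nonneg hr]
      nlinarith [abs_nonneg c]
    have h3 : 2 * |r * c| ≤ |m| := le_trans (by linarith) h2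
    have hmt : m * (r * c) ≤ |m| * |r * c| := by
      calc m * (r * c) ≤ |m * (r * c)| := le_abs_self _
        _ = |m| * |r * c| := abs_mul _ _
    nlinarith [mul_nonneg (sub_nonneg.2 h3) (abs_nonneg (r * c)),
      mul_nonneg (sub_nonneg.2 h3) (abs_nonneg m), sq_abs m, sq_abs (r * c),
      abs_nonneg m, abs_nonneg (r * c),
      mul_nonneg (sub_nonneg.2 h3) (sub_nonneg.2 h3)]

/-- Lemma 2.1, estimate (2.6): if `0 ≤ r ≤ 1` or `|m| ≥ 2r` then
`∫₀^{2π} |α(m - r cos θ)| dθ ≤ C ⟨m⟩^{-N}`. -/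
theorem circle_int_schwartz_smallr (α : SchwartzMap ℝ ℂ) (N : ℕ) :
    ∃ C : ℝ, 0 < C ∧ ∀ m r : ℝ, 0 ≤ r → (r ≤ 1 ∨ 2 * r ≤ |m|) →
      (∫ θ in (0 : ℝ)..(2 * π), ‖α (m - r * Real.cos θ)‖) ≤ C * jap m ^ (-(N : ℝ)) := by
  obtain ⟨D, hD, hDec⟩ := schwartz_poly_decay α N
  refine ⟨2 * π * (D * 5 ^ N), by positivity, ?_⟩
  intro m r hr hcase
  have hjap : (0 : ℝ) < jap m := lt_of_lt_of_le one_pos (one_le_jap m)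
  have hpow : jap m ^ (-(N : ℝ)) = (jap m ^ N)⁻¹ := by
    rw [Real.rpow_neg hjap.le, Real.rpow_natCast]
  rw [hpow]
  have key : ∀ θ : ℝ, ‖α (m - r * Real.cos θ)‖ ≤ D * 5 ^ N * (jap m ^ N)⁻¹ := by
    intro θ
    set x := m - r * Real.cos θ with hx
    have hkey : 1 + m ^ 2 ≤ 5 * (1 + x ^ 2) :=
      key_ineq m r (Real.cos θ) hr (Real.abs_cos_le_one θ) hcase
    have h1 := hDec x
    have hjm : jap m ^ N ≤ 5 ^ N * (1 + x ^ 2) ^ N := by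
      calc jap m ^ N ≤ (1 + m ^ 2) ^ N := by
            apply pow_le_pow_left₀ hjap.le
            nlinarith [jap_sq m, one_le_jap m]
        _ ≤ (5 * (1 + x ^ 2)) ^ N := pow_le_pow_left₀ (by positivity) hkey N
        _ = 5 ^ N * (1 + x ^ 2) ^ N := mul_pow _ _ _
    have hfin : ‖α x‖ * jap m ^ N ≤ D * 5 ^ N := by
      calc ‖α x‖ * jap m ^ N ≤ ‖α x‖ * (5 ^ N * (1 + x ^ 2) ^ N) :=
            mul_le_mul_of_nonneg_left hjm (norm_nonneg _)
        _ = 5 ^ N * ((1 + x ^ 2) ^ N * ‖α x‖) := by ring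
        _ ≤ 5 ^ N * D := mul_le_mul_of_nonneg_left h1 (by positivity)
        _ = D * 5 ^ N := by ring
    rw [← div_eq_mul_inv, le_div_iff₀ (pow_pos hjap N)]
    exact hfin
  have hcont : Continuous fun θ : ℝ => ‖α (m - r * Real.cos θ)‖ :=
    (α.continuous.comp (by continuity)).norm
  have h2pi : (0 : ℝ) ≤ 2 * π := by positivity
  calc (∫ θ in (0 : ℝ)..(2 * π), ‖α (m - r * Real.cos θ)‖)
      ≤ ∫ _ in (0 : ℝ)..(2 * π), D * 5 ^ N * (jap m ^ N)⁻¹ := by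
        apply intervalIntegral.integral_mono_on h2pi
          (hcont.intervalIntegrable _ _) intervalIntegrable_const
        intro θ _
        exact key θ
    _ = (2 * π) * (D * 5 ^ N * (jap m ^ N)⁻¹) := by
        rw [intervalIntegral.integral_const]
        simp [smul_eq_mul]
    _ = 2 * π * (D * 5 ^ N) * (jap m ^ N)⁻¹ := by ring

end
end

section
/- Let α be a Schwartz function on ℝ. Then there is a constant C such that for all r > 1 and all m ∈ ℝ with |m| ≤ 2r, one has ∫_{π/4}^{π − π/4} |α(m − r cos θ)| dθ ≤ C r^{−1}. -/
noncomputable section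
open MeasureTheory Real
open scoped ENNReal NNReal

lemma sin_ge_on (θ : ℝ) (h1 : π/4 ≤ θ) (h2 : θ ≤ π - π/4) :
    Real.sqrt 2 / 2 ≤ Real.sin θ := by
  have hpi := Real.pi_pos
  rcases le_total θ (π/2) with h | h
  · have := Real.sin_le_sin_of_le_of_le_pi_div_two (by linarith [Real.pi_div_two_pos] : -(π/2) ≤ π/4) h h1
    simpa [Real.sin_pi_div_four] using this
  · have h3 : π - θ ≤ π/2 := by linarith
    have h4 : π/4 ≤ π - θ := by linarith
    have := Real.sin_le_sin_of_le_of_le_pi_div_two (by linarith [Real.pi_div_two_pos] : -(π/2) ≤ π/4) h3 h4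
    rw [Real.sin_pi_sub] at this
    simpa [Real.sin_pi_div_four] using this

/-- Estimate (2.10): for `r > 1` and `|m| ≤ 2r`, the contribution of the angular region
`[π/4, π - π/4]` is bounded by `C r⁻¹`. -/
theorem circle_int_schwartz_middle (α : SchwartzMap ℝ ℂ) :
    ∃ C : ℝ, 0 < C ∧ ∀ m r : ℝ, 1 < r → |m| ≤ 2 * r →
      (∫ θ in (π / 4 : ℝ)..(π - π / 4), ‖α (m - r * Real.cos θ)‖) ≤ C * r⁻¹ := by
  have hint : Integrable (fun u : ℝ => ‖α u‖) := (α.integrable).norm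
  set A : ℝ := ∫ u : ℝ, ‖α u‖ with hA
  have hA0 : 0 ≤ A := integral_nonneg fun u => norm_nonneg _
  refine ⟨Real.sqrt 2 * A + 1, by positivity, ?_⟩
  intro m r hr _
  have hr0 : (0:ℝ) < r := by linarith
  have hab : (π/4 : ℝ) ≤ π - π/4 := by linarith [Real.pi_gt_three]
  have hcont : Continuous fun θ : ℝ => ‖α (m - r * Real.cos θ)‖ :=
    (α.continuous.comp (by continuity)).norm
  -- step A: pointwise bound
  have stepA : (∫ θ in (π / 4 : ℝ)..(π - π / 4), ‖α (m - r * Real.cos θ)‖)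
      ≤ ∫ θ in (π / 4 : ℝ)..(π - π / 4), Real.sqrt 2 * Real.sin θ * ‖α (m - r * Real.cos θ)‖ := by
    apply intervalIntegral.integral_mono_on hab
    · exact hcont.intervalIntegrable _ _
    · exact (by continuity : Continuous fun θ : ℝ => Real.sqrt 2 * Real.sin θ * ‖α (m - r * Real.cos θ)‖).intervalIntegrable _ _
    · intro θ hθ
      have hs := sin_ge_on θ hθ.1 hθ.2
      have hs2 : Real.sqrt 2 * Real.sqrt 2 = 2 := Real.mul_self_sqrt (by norm_num)
      have h1 : (1:ℝ) ≤ Real.sqrt 2 * Real.sin θ := by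
        nlinarith [Real.sqrt_nonneg 2]
      nlinarith [norm_nonneg (α (m - r * Real.cos θ))]
  -- step B: pull out constants
  have stepB : (∫ θ in (π / 4 : ℝ)..(π - π / 4), Real.sqrt 2 * Real.sin θ * ‖α (m - r * Real.cos θ)‖)
      = Real.sqrt 2 * r⁻¹ * ∫ θ in (π / 4 : ℝ)..(π - π / 4), (r * Real.sin θ) * ‖α (m - r * Real.cos θ)‖ := by
    rw [← intervalIntegral.integral_const_mul]
    apply intervalIntegral.integral_congr
    intro θ _
    field_simp
  -- step C: change of variables
  have stepC : (∫ θ in (π / 4 : ℝ)..(π - π / 4), (r * Real.sin θ) * ‖α (m - r * Real.cos θ)‖)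
      = ∫ u in (m - r * Real.cos (π/4))..(m - r * Real.cos (π - π/4)), ‖α u‖ := by
    have hd : ∀ θ ∈ Set.uIcc (π/4 : ℝ) (π - π/4),
        HasDerivAt (fun θ : ℝ => m - r * Real.cos θ) (r * Real.sin θ) θ := by
      intro θ _
      have := ((Real.hasDerivAt_cos θ).const_mul r).const_sub m
      rw [show r * Real.sin θ = -(r * -Real.sin θ) by ring]; exact this
    have := intervalIntegral.integral_comp_smul_deriv hd
      ((continuous_const.mul Real.continuous_sin).continuousOn : ContinuousOn (fun θ : ℝ => r * Real.sin θ) (Set.uIcc (π/4) (π - π/4)))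
      (by continuity : Continuous fun u : ℝ => ‖α u‖)
    simpa [smul_eq_mul] using this
  -- step D
  have hle : m - r * Real.cos (π/4) ≤ m - r * Real.cos (π - π/4) := by
    rw [Real.cos_pi_sub, Real.cos_pi_div_four]
    nlinarith [Real.sqrt_nonneg 2, Real.sq_sqrt (by norm_num : (0:ℝ) ≤ 2)]
  have stepD : (∫ u in (m - r * Real.cos (π/4))..(m - r * Real.cos (π - π/4)), ‖α u‖) ≤ A := by
    rw [intervalIntegral.integral_of_le hle]
    exact setIntegral_le_integral hint (Filter.Eventually.of_forall fun u => norm_nonneg _)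
  have hrinv : (0:ℝ) < r⁻¹ := by positivity
  calc (∫ θ in (π / 4 : ℝ)..(π - π / 4), ‖α (m - r * Real.cos θ)‖)
      ≤ Real.sqrt 2 * r⁻¹ * ∫ u in (m - r * Real.cos (π/4))..(m - r * Real.cos (π - π/4)), ‖α u‖ := by
        rw [← stepC, ← stepB]; exact stepA
    _ ≤ Real.sqrt 2 * r⁻¹ * A := by
        apply mul_le_mul_of_nonneg_left stepD (by positivity)
    _ ≤ (Real.sqrt 2 * A + 1) * r⁻¹ := by
        have : Real.sqrt 2 * r⁻¹ * A = (Real.sqrt 2 * A) * r⁻¹ := by ring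
        rw [this]
        apply mul_le_mul_of_nonneg_right (by linarith) (le_of_lt hrinv)

end
end
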